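/- Let Z be the closure of the span of Dirac measures in (C^{1+α}(ℝ^d))*. The map T : Z* → C^{1+α}(ℝ^d) defined by (Tφ)(x) = φ(δ_x) is a linear isomorphism of Banach spaces; in particular T is injective, surjective, and ‖T^{-1}y‖_{Z*} ≤ ‖y‖_{C^{1+α}} for all y ∈ C^{1+α}(ℝ^d). -/

import Mathlib

open MeasureTheory Metric Filter
open scoped NNReal ENNReal BigOperators Topology

noncomputable section

/-- Euclidean space ℝ^d. -/
abbrev Ed (d : ℕ) : Type := EuclideanSpace ℝ (Fin d)

/-- The α-Hölder seminorm of the gradient map `g = fderiv ℝ f`. -/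
def holderSemi {d : ℕ} (α : ℝ) (g : Ed d → (Ed d →L[ℝ] ℝ)) : ℝ :=
  ⨆ x, ⨆ y, ‖g x - g y‖ / dist x y ^ α

/-- The C^{1+α} norm: sup|f| + sup|∇f| + α-Hölder seminorm of ∇f. -/
def c1aNorm {d : ℕ} (α : ℝ) (f : Ed d → ℝ) : ℝ :=
  (⨆ x, |f x|) + (⨆ x, ‖fderiv ℝ f x‖) + holderSemi α (fderiv ℝ f)

/-- Membership in C^{1+α}(ℝ^d): bounded C¹ function with bounded, α-Hölder gradient. -/
def MemC1a {d : ℕ} (α : ℝ) (f : Ed d → ℝ) : Prop :=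
  ContDiff ℝ 1 f ∧ BddAbove (Set.range fun x => |f x|) ∧
    BddAbove (Set.range fun x => ‖fderiv ℝ f x‖) ∧
    ∃ C : ℝ≥0, HolderWith C α.toNNReal (fderiv ℝ f)

/-- The dual norm on (C^{1+α}(ℝ^d))*, applied to a (not necessarily linear)
functional `L` on functions: sup of |L f| over ‖f‖_{C^{1+α}} ≤ 1. -/
def dualNorm {d : ℕ} (α : ℝ) (L : (Ed d → ℝ) → ℝ) : ℝ :=
  sSup {r | ∃ f, MemC1a α f ∧ c1aNorm α f ≤ 1 ∧ r = |L f|}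

/-- Functionals on test functions; the ambient space containing (C^{1+α}(ℝ^d))*. -/
abbrev W (d : ℕ) : Type := (Ed d → ℝ) → ℝ

/-- The Dirac functional δ_x : f ↦ f(x). -/
def diracW {d : ℕ} (x : Ed d) : W d := fun f => f x

/-- `z` is a bounded linear functional on C^{1+α}(ℝ^d). -/
def IsDualElt {d : ℕ} (α : ℝ) (z : W d) : Prop :=
  (∀ f g : Ed d → ℝ, z (f + g) = z f + z g) ∧
  (∀ (c : ℝ) (f : Ed d → ℝ), z (c • f) = c * z f) ∧
  ∃ M : ℝ, ∀ f, MemC1a α f → |z f| ≤ M * c1aNorm α f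

/-- Membership in Z, the closure of span{δ_x : x ∈ ℝ^d} in (C^{1+α}(ℝ^d))*. -/
def InZ {d : ℕ} (α : ℝ) (z : W d) : Prop :=
  IsDualElt α z ∧
  ∀ ε > (0 : ℝ), ∃ (n : ℕ) (c : Fin n → ℝ) (g : Fin n → Ed d),
    dualNorm α (fun f => z f - ∑ i, c i * f (g i)) ≤ ε

/-- `φ` is a bounded linear functional on Z (an element of Z*). -/
def BddOnZ {d : ℕ} (α : ℝ) (φ : W d →ₗ[ℝ] ℝ) : Prop :=
  ∃ M : ℝ, ∀ z : W d, InZ α z → |φ z| ≤ M * dualNorm α z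

/-- The operator norm of an element of Z*. -/
def zDualNorm {d : ℕ} (α : ℝ) (φ : W d →ₗ[ℝ] ℝ) : ℝ :=
  sSup {r | ∃ z : W d, InZ α z ∧ dualNorm α z ≤ 1 ∧ r = |φ z|}

/-!
Finite combinations of Diracs are dense in `Z`, so a bounded functional on `Z` is determined by
its values on Diracs; and `y ↦ (z ↦ z y)` inverts `T` with norm at most `‖y‖`, because
`|z y| ≤ ‖z‖ ‖y‖`. The substance is that `Tφ` lies in `C^{1+α}`. The derivative functional
`D_x v : f ↦ Df(x) v` lies in `Z`: by the Hölder bound on `Df`, the difference quotient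
`(δ_{x+tv} - δ_x) / t` is within `t^α ‖v‖^{1+α}` of it. Then `φ (D_x ·)` is the derivative
of `Tφ`, and the dual-norm estimates `‖δ_{x+h} - δ_x - D_x h‖ ≤ ‖h‖^{1+α}` and
`‖D_x v - D_y v‖ ≤ |x - y|^α ‖v‖` become the Taylor and Hölder bounds for `Tφ`.
-/

theorem HolderWith.of_dist_le {X Y : Type*} [PseudoMetricSpace X] [PseudoMetricSpace Y]
    {C r : ℝ≥0} {f : X → Y} (h : ∀ x y, dist (f x) (f y) ≤ C * dist x y ^ (r : ℝ)) :
    HolderWith C r f := by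
  intro x y
  rw [edist_dist, edist_dist, ← ENNReal.ofReal_coe_nnreal,
    ENNReal.ofReal_rpow_of_nonneg dist_nonneg r.coe_nonneg, ← ENNReal.ofReal_mul C.coe_nonneg]
  exact ENNReal.ofReal_le_ofReal (h x y)

theorem HolderWith.dist_div_rpow_le {X Y : Type*} [PseudoMetricSpace X] [PseudoMetricSpace Y]
    {C r : ℝ≥0} {f : X → Y} (hf : HolderWith C r f) (x y : X) :
    dist (f x) (f y) / dist x y ^ (r : ℝ) ≤ C :=
  div_le_of_le_mul₀ (by positivity) C.coe_nonneg (hf.dist_le x y)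

section Calculus

variable {E F : Type*} [NormedAddCommGroup E] [NormedSpace ℝ E]
  [NormedAddCommGroup F] [NormedSpace ℝ F]

theorem norm_image_add_sub_sub_fderiv_le {f : E → F} (hf : Differentiable ℝ f) {x : E}
    {H α : ℝ} (hH : 0 ≤ H) (hα : 0 ≤ α)
    (hf' : ∀ z, ‖fderiv ℝ f z - fderiv ℝ f x‖ ≤ H * ‖z - x‖ ^ α) (h : E) :
    ‖f (x + h) - f x - fderiv ℝ f x h‖ ≤ H * ‖h‖ ^ α * ‖h‖ := by
  have hxh : x + h ∈ closedBall x ‖h‖ := by simp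
  have := (convex_closedBall x ‖h‖).norm_image_sub_le_of_norm_fderiv_le' (C := H * ‖h‖ ^ α)
    (fun z _ => hf z)
    (fun z hz => (hf' z).trans (by gcongr; exact mem_closedBall_iff_norm.1 hz))
    (mem_closedBall_self (norm_nonneg h)) hxh
  simpa using this

theorem hasFDerivAt_of_norm_sub_le_rpow_mul {f : E → F} {f' : E →L[ℝ] F} {x : E} {M α : ℝ}
    (hα : 0 < α) (hf : ∀ h, ‖f (x + h) - f x - f' h‖ ≤ M * ‖h‖ ^ α * ‖h‖) :
    HasFDerivAt f f' x := by
  rw [hasFDerivAt_iff_isLittleO_nhds_zero]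
  have hsmall : (fun h : E => ‖h‖ ^ α) =o[𝓝 0] (fun _ => (1 : ℝ)) := by
    rw [Asymptotics.isLittleO_one_iff]
    have := (Real.continuousAt_rpow_const 0 α (Or.inr hα.le)).tendsto.comp
      (continuous_norm.tendsto' (0 : E) 0 norm_zero)
    rwa [Real.zero_rpow hα.ne'] at this
  refine (Asymptotics.IsBigO.of_bound M (Eventually.of_forall fun h => ?_)).trans_isLittleO
    ((hsmall.mul_isBigO (Asymptotics.isBigO_refl (fun h : E => ‖h‖) _)).trans_isBigO ?_)
  · simpa [abs_of_nonneg (Real.rpow_nonneg (norm_nonneg h) α), mul_assoc] using hf h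
  · simpa using (Asymptotics.isBigO_norm_left (f' := fun h : E => h)).2
      (Asymptotics.isBigO_refl _ _)

end Calculus

section C1a

variable {d : ℕ} {α : ℝ}

theorem holderSemi_nonneg (g : Ed d → (Ed d →L[ℝ] ℝ)) : 0 ≤ holderSemi α g :=
  Real.iSup_nonneg fun _ => Real.iSup_nonneg fun _ => by positivity

theorem norm_sub_le_holderSemi_mul (hα : 0 ≤ α) {g : Ed d → (Ed d →L[ℝ] ℝ)}
    (hg : MemHolder α.toNNReal g) (x y : Ed d) :
    ‖g x - g y‖ ≤ holderSemi α g * dist x y ^ α := by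
  obtain ⟨C, hC⟩ := hg
  have hratio : ∀ x y, ‖g x - g y‖ / dist x y ^ α ≤ C := fun x y => by
    have := hC.dist_div_rpow_le x y
    rwa [Real.coe_toNNReal α hα, dist_eq_norm] at this
  rcases eq_or_ne x y with rfl | hne
  · simpa using mul_nonneg (holderSemi_nonneg (α := α) g)
      (Real.rpow_nonneg (dist_nonneg (x := x) (y := x)) α)
  rw [← div_le_iff₀ (Real.rpow_pos_of_pos (dist_pos.2 hne) α)]
  have hrow : ‖g x - g y‖ / dist x y ^ α ≤ ⨆ y, ‖g x - g y‖ / dist x y ^ α :=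
    le_ciSup ⟨(C : ℝ), Set.forall_mem_range.2 (hratio x)⟩ y
  exact hrow.trans (le_ciSup (f := fun x => ⨆ y, ‖g x - g y‖ / dist x y ^ α)
    ⟨(C : ℝ), Set.forall_mem_range.2 fun x => ciSup_le (hratio x)⟩ x)

theorem c1aNorm_nonneg (f : Ed d → ℝ) : 0 ≤ c1aNorm α f :=
  add_nonneg (add_nonneg (Real.iSup_nonneg fun _ => abs_nonneg _)
    (Real.iSup_nonneg fun _ => norm_nonneg _)) (holderSemi_nonneg _)

theorem c1aNorm_smul (c : ℝ) (f : Ed d → ℝ) : c1aNorm α (c • f) = |c| * c1aNorm α f := by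
  have hsub : ∀ x y, ‖c • fderiv ℝ f x - c • fderiv ℝ f y‖ = |c| * ‖fderiv ℝ f x - fderiv ℝ f y‖ :=
    fun x y => by rw [← smul_sub, norm_smul, Real.norm_eq_abs]
  simp only [c1aNorm, holderSemi, fderiv_const_smul_field, Pi.smul_apply, smul_eq_mul, abs_mul,
    norm_smul, Real.norm_eq_abs, hsub, mul_div_assoc, ← Real.mul_iSup_of_nonneg (abs_nonneg c)]
  ring

@[simp]
theorem c1aNorm_zero : c1aNorm α (0 : Ed d → ℝ) = 0 := by
  simpa using c1aNorm_smul (α := α) 0 (0 : Ed d → ℝ)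

theorem abs_le_c1aNorm {f : Ed d → ℝ} (hf : MemC1a α f) (x : Ed d) : |f x| ≤ c1aNorm α f := by
  unfold c1aNorm
  linarith [le_ciSup hf.2.1 x, Real.iSup_nonneg fun x => norm_nonneg (fderiv ℝ f x),
    holderSemi_nonneg (α := α) (fderiv ℝ f)]

theorem norm_fderiv_le_c1aNorm {f : Ed d → ℝ} (hf : MemC1a α f) (x : Ed d) :
    ‖fderiv ℝ f x‖ ≤ c1aNorm α f := by
  unfold c1aNorm
  linarith [le_ciSup hf.2.2.1 x, Real.iSup_nonneg fun x => abs_nonneg (f x),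
    holderSemi_nonneg (α := α) (fderiv ℝ f)]

theorem norm_fderiv_sub_le_c1aNorm_mul (hα : 0 ≤ α) {f : Ed d → ℝ} (hf : MemC1a α f)
    (x y : Ed d) : ‖fderiv ℝ f x - fderiv ℝ f y‖ ≤ c1aNorm α f * dist x y ^ α := by
  refine (norm_sub_le_holderSemi_mul hα hf.2.2.2 x y).trans ?_
  gcongr
  unfold c1aNorm
  linarith [Real.iSup_nonneg fun x => abs_nonneg (f x),
    Real.iSup_nonneg fun x => norm_nonneg (fderiv ℝ f x)]

theorem abs_image_add_sub_sub_fderiv_le (hα : 0 ≤ α) {f : Ed d → ℝ} (hf : MemC1a α f)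
    (x h : Ed d) : |f (x + h) - f x - fderiv ℝ f x h| ≤ c1aNorm α f * ‖h‖ ^ α * ‖h‖ :=
  norm_image_add_sub_sub_fderiv_le (hf.1.differentiable one_ne_zero) (c1aNorm_nonneg f) hα
    (fun z => by simpa [dist_eq_norm] using norm_fderiv_sub_le_c1aNorm_mul hα hf z x) h

theorem memC1a_zero : MemC1a α (0 : Ed d → ℝ) := by
  refine ⟨contDiff_const, ?_, ?_, 0, ?_⟩ <;> simp [fderiv_zero, HolderWith.zero]

theorem MemC1a.add {f g : Ed d → ℝ} (hf : MemC1a α f) (hg : MemC1a α g) :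
    MemC1a α (f + g) := by
  have hfd : fderiv ℝ (f + g) = fderiv ℝ f + fderiv ℝ g := funext fun x =>
    fderiv_add (hf.1.differentiable one_ne_zero x) (hg.1.differentiable one_ne_zero x)
  refine ⟨hf.1.add hg.1, (hf.2.1.range_add hg.2.1).range_mono _ fun x => abs_add_le _ _,
    (hf.2.2.1.range_add hg.2.2.1).range_mono _ fun x => ?_, ?_⟩
  · simpa [hfd] using norm_add_le (fderiv ℝ f x) (fderiv ℝ g x)
  · rw [hfd]
    exact MemHolder.add hf.2.2.2 hg.2.2.2

theorem MemC1a.const_smul {f : Ed d → ℝ} (hf : MemC1a α f) (c : ℝ) : MemC1a α (c • f) := by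
  refine ⟨hf.1.const_smul c, ?_, ?_, ?_⟩
  · simpa [abs_mul] using hf.2.1.range_comp_left (monotone_id.const_mul (abs_nonneg c))
  · simpa [fderiv_const_smul_field, norm_smul] using
      hf.2.2.1.range_comp_left (monotone_id.const_mul (abs_nonneg c))
  · rw [fderiv_const_smul_field]
    exact MemHolder.smul hf.2.2.2

end C1a

section Dual

variable {d : ℕ} {α : ℝ}

def dualSubmodule (d : ℕ) (α : ℝ) : Submodule ℝ (W d) where
  carrier := {z | IsDualElt α z}
  add_mem' := by
    rintro z₁ z₂ ⟨hadd₁, hsmul₁, M₁, hM₁⟩ ⟨hadd₂, hsmul₂, M₂, hM₂⟩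
    refine ⟨fun f g => ?_, fun c f => ?_, M₁ + M₂, fun f hf => ?_⟩
    · simp only [Pi.add_apply, hadd₁, hadd₂]; ring
    · simp only [Pi.add_apply, hsmul₁, hsmul₂]; ring
    · calc |z₁ f + z₂ f| ≤ |z₁ f| + |z₂ f| := abs_add_le _ _
        _ ≤ (M₁ + M₂) * c1aNorm α f := by linarith [hM₁ f hf, hM₂ f hf]
  zero_mem' := ⟨fun _ _ => by simp, fun _ _ => by simp, 0, fun f _ => by simp⟩
  smul_mem' := by
    rintro c z ⟨hadd, hsmul, M, hM⟩
    refine ⟨fun f g => ?_, fun e f => ?_, |c| * M, fun f hf => ?_⟩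
    · simp only [Pi.smul_apply, smul_eq_mul, hadd]; ring
    · simp only [Pi.smul_apply, smul_eq_mul, hsmul]; ring
    · simpa [abs_mul, mul_assoc] using mul_le_mul_of_nonneg_left (hM f hf) (abs_nonneg c)

theorem isDualElt_diracW (x : Ed d) : IsDualElt α (diracW x) :=
  ⟨fun _ _ => rfl, fun _ _ => rfl, 1, fun f hf => by rw [one_mul]; exact abs_le_c1aNorm hf x⟩

theorem IsDualElt.sub {z₁ z₂ : W d} (h₁ : IsDualElt α z₁) (h₂ : IsDualElt α z₂) :
    IsDualElt α (z₁ - z₂) :=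
  (dualSubmodule d α).sub_mem h₁ h₂

theorem dualNorm_le {L : W d} {B : ℝ} (hB : 0 ≤ B)
    (h : ∀ f, MemC1a α f → c1aNorm α f ≤ 1 → |L f| ≤ B) : dualNorm α L ≤ B :=
  Real.sSup_le (by rintro r ⟨f, hf, hf1, rfl⟩; exact h f hf hf1) hB

theorem abs_le_dualNorm {z : W d} (hz : IsDualElt α z) {f : Ed d → ℝ} (hf : MemC1a α f)
    (hf1 : c1aNorm α f ≤ 1) : |z f| ≤ dualNorm α z := by
  obtain ⟨M, hM⟩ := hz.2.2
  refine le_csSup ⟨(max M 0 : ℝ), ?_⟩ ⟨f, hf, hf1, rfl⟩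
  rintro r ⟨g, hg, hg1, rfl⟩
  calc |z g| ≤ M * c1aNorm α g := hM g hg
    _ ≤ max M 0 * 1 := mul_le_mul (le_max_left M 0) hg1 (c1aNorm_nonneg g) (le_max_right M 0)
    _ = max M 0 := mul_one _

theorem IsDualElt.map_zero {z : W d} (hz : IsDualElt α z) : z 0 = 0 := by
  simpa using hz.2.1 0 0

theorem dualNorm_nonneg {z : W d} (hz : IsDualElt α z) : 0 ≤ dualNorm α z := by
  simpa [hz.map_zero] using abs_le_dualNorm hz memC1a_zero (by simp)

theorem abs_le_dualNorm_mul {z : W d} (hz : IsDualElt α z) {f : Ed d → ℝ} (hf : MemC1a α f) :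
    |z f| ≤ dualNorm α z * c1aNorm α f := by
  rcases (c1aNorm_nonneg (α := α) f).eq_or_lt with h0 | hpos
  · have hf0 : f = 0 := funext fun x => abs_nonpos_iff.1 (h0 ▸ abs_le_c1aNorm hf x)
    simp [hf0, hz.map_zero]
  · set N := c1aNorm α f
    have hunit : |z (N⁻¹ • f)| ≤ dualNorm α z := abs_le_dualNorm hz (hf.const_smul _)
      (by rw [c1aNorm_smul, abs_of_pos (inv_pos.2 hpos), inv_mul_cancel₀ hpos.ne'])
    rw [hz.2.1, abs_mul, abs_of_pos (inv_pos.2 hpos), inv_mul_le_iff₀ hpos] at hunit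
    linarith

theorem dualNorm_sub_le {z₁ z₂ : W d} (h₁ : IsDualElt α z₁) (h₂ : IsDualElt α z₂) :
    dualNorm α (z₁ - z₂) ≤ dualNorm α z₁ + dualNorm α z₂ :=
  dualNorm_le (add_nonneg (dualNorm_nonneg h₁) (dualNorm_nonneg h₂)) fun _ hf hf1 =>
    (abs_sub _ _).trans (add_le_add (abs_le_dualNorm h₁ hf hf1) (abs_le_dualNorm h₂ hf hf1))

end Dual

section Z

variable {d : ℕ} {α : ℝ}

def diracComb {n : ℕ} (c : Fin n → ℝ) (g : Fin n → Ed d) : W d := fun f => ∑ i, c i * f (g i)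

theorem diracComb_eq_sum {n : ℕ} (c : Fin n → ℝ) (g : Fin n → Ed d) :
    diracComb c g = ∑ i, c i • diracW (g i) := by
  ext f
  simp [diracComb, diracW, Finset.sum_apply]

theorem diracComb_append_sub {m n : ℕ} (c₁ : Fin m → ℝ) (g₁ : Fin m → Ed d)
    (c₂ : Fin n → ℝ) (g₂ : Fin n → Ed d) :
    diracComb (Fin.append c₁ (-c₂)) (Fin.append g₁ g₂) = diracComb c₁ g₁ - diracComb c₂ g₂ := by
  ext f
  simp [diracComb, Fin.sum_univ_add, sub_eq_add_neg]

theorem isDualElt_diracComb {n : ℕ} (c : Fin n → ℝ) (g : Fin n → Ed d) :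
    IsDualElt α (diracComb c g) := by
  rw [diracComb_eq_sum]
  exact (dualSubmodule d α).sum_mem fun i _ =>
    (dualSubmodule d α).smul_mem (c i) (isDualElt_diracW (g i))

theorem inZ_iff {z : W d} : InZ α z ↔ IsDualElt α z ∧
    ∀ ε > (0 : ℝ), ∃ (n : ℕ) (c : Fin n → ℝ) (g : Fin n → Ed d),
      dualNorm α (z - diracComb c g) ≤ ε := Iff.rfl

theorem inZ_diracComb {n : ℕ} (c : Fin n → ℝ) (g : Fin n → Ed d) : InZ α (diracComb c g) :=
  inZ_iff.2 ⟨isDualElt_diracComb c g, fun _ hε => ⟨n, c, g, dualNorm_le hε.le fun _ _ _ => by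
    simpa using hε.le⟩⟩

theorem inZ_diracW (x : Ed d) : InZ α (diracW x) := by
  convert inZ_diracComb (α := α) (fun _ : Fin 1 => 1) (fun _ => x)
  ext f
  simp [diracComb, diracW]

theorem InZ.sub {z₁ z₂ : W d} (h₁ : InZ α z₁) (h₂ : InZ α z₂) : InZ α (z₁ - z₂) := by
  refine inZ_iff.2 ⟨h₁.1.sub h₂.1, fun ε hε => ?_⟩
  obtain ⟨m, c₁, g₁, hap₁⟩ := (inZ_iff.1 h₁).2 (ε / 2) (by positivity)
  obtain ⟨n, c₂, g₂, hap₂⟩ := (inZ_iff.1 h₂).2 (ε / 2) (by positivity)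
  refine ⟨m + n, Fin.append c₁ (-c₂), Fin.append g₁ g₂, ?_⟩
  have hregroup : z₁ - z₂ - diracComb (Fin.append c₁ (-c₂)) (Fin.append g₁ g₂) =
      (z₁ - diracComb c₁ g₁) - (z₂ - diracComb c₂ g₂) := by
    rw [diracComb_append_sub]; abel
  rw [hregroup]
  linarith [dualNorm_sub_le (h₁.1.sub (isDualElt_diracComb c₁ g₁))
    (h₂.1.sub (isDualElt_diracComb c₂ g₂))]

end Z

section DerivDirac

variable {d : ℕ} {α : ℝ}

def c1aSubmodule (d : ℕ) (α : ℝ) : Submodule ℝ (Ed d → ℝ) where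
  carrier := {f | MemC1a α f}
  add_mem' := MemC1a.add
  zero_mem' := memC1a_zero
  smul_mem' c _ hf := hf.const_smul c

-- Elements of `Z` must be linear on all functions, not only on `C^{1+α}`; precomposing
-- `f ↦ fderiv ℝ f x v` with this (arbitrary) linear projection makes it so.
def c1aProj (d : ℕ) (α : ℝ) : (Ed d → ℝ) →ₗ[ℝ] (Ed d → ℝ) :=
  (c1aSubmodule d α).projection _ (Submodule.exists_isCompl _).choose_spec

theorem memC1a_c1aProj (f : Ed d → ℝ) : MemC1a α (c1aProj d α f) :=
  Submodule.projection_apply_mem (p := c1aSubmodule d α) _ f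

theorem c1aProj_of_memC1a {f : Ed d → ℝ} (hf : MemC1a α f) : c1aProj d α f = f :=
  Submodule.projection_apply_of_mem_left _ (show f ∈ c1aSubmodule d α from hf)

def derivDirac (α : ℝ) (x : Ed d) : Ed d →ₗ[ℝ] W d where
  toFun v f := fderiv ℝ (c1aProj d α f) x v
  map_add' v w := by ext f; simp
  map_smul' c v := by ext f; simp

theorem derivDirac_apply_of_memC1a {f : Ed d → ℝ} (hf : MemC1a α f) (x v : Ed d) :
    derivDirac α x v f = fderiv ℝ f x v := by
  simp [derivDirac, c1aProj_of_memC1a hf]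

theorem isDualElt_derivDirac (x v : Ed d) : IsDualElt α (derivDirac α x v) := by
  have hdiff (f : Ed d → ℝ) : DifferentiableAt ℝ (c1aProj d α f) x :=
    (memC1a_c1aProj f).1.differentiable one_ne_zero x
  refine ⟨fun f g => ?_, fun c f => ?_, ‖v‖, fun f hf => ?_⟩
  · simp [derivDirac, fderiv_add (hdiff f) (hdiff g)]
  · simp [derivDirac, fderiv_const_smul_field]
  · rw [derivDirac_apply_of_memC1a hf, mul_comm]
    exact ((fderiv ℝ f x).le_opNorm v).trans (by gcongr; exact norm_fderiv_le_c1aNorm hf x)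

theorem dualNorm_derivDirac_le (x v : Ed d) : dualNorm α (derivDirac α x v) ≤ ‖v‖ :=
  dualNorm_le (norm_nonneg v) fun f hf hf1 => by
    rw [derivDirac_apply_of_memC1a hf]
    exact ((fderiv ℝ f x).le_opNorm v).trans
      (mul_le_of_le_one_left (norm_nonneg v) ((norm_fderiv_le_c1aNorm hf x).trans hf1))

theorem dualNorm_derivDirac_sub_le (hα : 0 ≤ α) (x y v : Ed d) :
    dualNorm α (derivDirac α x v - derivDirac α y v) ≤ dist x y ^ α * ‖v‖ :=
  dualNorm_le (by positivity) fun f hf hf1 => by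
    rw [Pi.sub_apply, derivDirac_apply_of_memC1a hf, derivDirac_apply_of_memC1a hf,
      ← sub_apply]
    refine ((fderiv ℝ f x - fderiv ℝ f y).le_opNorm v).trans ?_
    gcongr
    exact (norm_fderiv_sub_le_c1aNorm_mul hα hf x y).trans
      (mul_le_of_le_one_left (by positivity) hf1)

theorem dualNorm_diracW_sub_sub_derivDirac_le (hα : 0 ≤ α) (x h : Ed d) :
    dualNorm α (diracW (x + h) - diracW x - derivDirac α x h) ≤ ‖h‖ ^ α * ‖h‖ :=
  dualNorm_le (by positivity) fun f hf hf1 => by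
    simp only [Pi.sub_apply, diracW, derivDirac_apply_of_memC1a hf]
    rw [← one_mul (‖h‖ ^ α * ‖h‖), ← mul_assoc]
    exact (abs_image_add_sub_sub_fderiv_le hα hf x h).trans (by gcongr)

theorem dualNorm_derivDirac_sub_diracComb_le (hα : 0 ≤ α) (x v : Ed d) {t : ℝ} (ht : 0 < t) :
    dualNorm α (derivDirac α x v - diracComb ![t⁻¹, -t⁻¹] ![x + t • v, x]) ≤
      t ^ α * (‖v‖ ^ α * ‖v‖) :=
  dualNorm_le (by positivity) fun f hf hf1 => by
    have htaylor := abs_image_add_sub_sub_fderiv_le hα hf x (t • v)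
    have hlin : fderiv ℝ f x (t • v) = t * fderiv ℝ f x v := by simp
    have hnorm : ‖t • v‖ = t * ‖v‖ := by rw [norm_smul, Real.norm_of_nonneg ht.le]
    simp only [Pi.sub_apply, diracComb, derivDirac_apply_of_memC1a hf, Fin.sum_univ_two,
      Matrix.cons_val_zero, Matrix.cons_val_one]
    have hquot : fderiv ℝ f x v - (t⁻¹ * f (x + t • v) + -t⁻¹ * f x) =
        -(t⁻¹ * (f (x + t • v) - f x - fderiv ℝ f x (t • v))) := by
      rw [hlin]
      field_simp
      ring
    rw [hquot, abs_neg, abs_mul, abs_of_pos (inv_pos.2 ht)]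
    calc t⁻¹ * |f (x + t • v) - f x - fderiv ℝ f x (t • v)|
        ≤ t⁻¹ * (1 * ‖t • v‖ ^ α * ‖t • v‖) := by gcongr; exact htaylor.trans (by gcongr)
      _ = t ^ α * (‖v‖ ^ α * ‖v‖) := by
          rw [hnorm, Real.mul_rpow ht.le (norm_nonneg v)]
          field_simp

end DerivDirac

section Main

variable {d : ℕ} {α : ℝ}

theorem dualNorm_diracW_le (x : Ed d) : dualNorm α (diracW x) ≤ 1 :=
  dualNorm_le zero_le_one fun _ hf hf1 => (abs_le_c1aNorm hf x).trans hf1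

theorem inZ_derivDirac (hα : 0 < α) (x v : Ed d) : InZ α (derivDirac α x v) := by
  refine inZ_iff.2 ⟨isDualElt_derivDirac x v, fun ε hε => ?_⟩
  have hlim : Tendsto (fun t : ℝ => t ^ α * (‖v‖ ^ α * ‖v‖)) (𝓝[>] 0) (𝓝 0) := by
    have := ((Real.continuousAt_rpow_const 0 α (Or.inr hα.le)).tendsto.mul_const
      (‖v‖ ^ α * ‖v‖)).mono_left (nhdsWithin_le_nhds (s := Set.Ioi 0))
    simpa [Real.zero_rpow hα.ne'] using this
  obtain ⟨t, hsmall, ht⟩ := ((hlim.eventually (ge_mem_nhds hε)).and self_mem_nhdsWithin).exists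
  exact ⟨2, _, _, (dualNorm_derivDirac_sub_diracComb_le hα.le x v ht).trans hsmall⟩

theorem BddOnZ.exists_nonneg_bound {φ : W d →ₗ[ℝ] ℝ} (hφ : BddOnZ α φ) :
    ∃ M, 0 ≤ M ∧ ∀ z, InZ α z → ∀ B, dualNorm α z ≤ B → |φ z| ≤ M * B := by
  obtain ⟨M, hM⟩ := hφ
  refine ⟨max M 0, le_max_right _ _, fun z hz B hB => ?_⟩
  calc |φ z| ≤ M * dualNorm α z := hM z hz
    _ ≤ max M 0 * B := mul_le_mul (le_max_left M 0) hB (dualNorm_nonneg hz.1) (le_max_right M 0)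

theorem BddOnZ.sub {φ₁ φ₂ : W d →ₗ[ℝ] ℝ} (h₁ : BddOnZ α φ₁) (h₂ : BddOnZ α φ₂) :
    BddOnZ α (φ₁ - φ₂) := by
  obtain ⟨M₁, -, hM₁⟩ := h₁.exists_nonneg_bound
  obtain ⟨M₂, -, hM₂⟩ := h₂.exists_nonneg_bound
  refine ⟨M₁ + M₂, fun z hz => ?_⟩
  rw [LinearMap.sub_apply, add_mul]
  exact (abs_sub _ _).trans (add_le_add (hM₁ z hz _ le_rfl) (hM₂ z hz _ le_rfl))

theorem BddOnZ.eq_zero_of_diracW {φ : W d →ₗ[ℝ] ℝ} (hφ : BddOnZ α φ)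
    (h0 : ∀ x, φ (diracW x) = 0) {z : W d} (hz : InZ α z) : φ z = 0 := by
  obtain ⟨M, -, hM⟩ := hφ.exists_nonneg_bound
  have hsmall : ∀ ε ∈ Set.Ioi (0 : ℝ), |φ z| ≤ M * ε := fun ε hε => by
    obtain ⟨n, c, g, hap⟩ := (inZ_iff.1 hz).2 ε hε
    have hcomb : φ (diracComb c g) = 0 := by simp [diracComb_eq_sum, h0]
    simpa [hcomb] using hM _ (hz.sub (inZ_diracComb c g)) ε hap
  exact abs_nonpos_iff.1 (ge_of_tendsto
    (((continuous_const_mul M).tendsto' 0 0 (mul_zero M)).mono_left nhdsWithin_le_nhds)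
    (eventually_nhdsWithin_of_forall hsmall))

theorem BddOnZ.eq_of_diracW {φ₁ φ₂ : W d →ₗ[ℝ] ℝ} (h₁ : BddOnZ α φ₁) (h₂ : BddOnZ α φ₂)
    (hd : ∀ x, φ₁ (diracW x) = φ₂ (diracW x)) {z : W d} (hz : InZ α z) : φ₁ z = φ₂ z :=
  sub_eq_zero.1 ((h₁.sub h₂).eq_zero_of_diracW (fun x => sub_eq_zero.2 (hd x)) hz)

theorem memC1a_of_taylor_bounds (hα : 0 < α) {g : Ed d → ℝ} {L : Ed d → Ed d →L[ℝ] ℝ} {M : ℝ}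
    (hg : ∀ x, |g x| ≤ M) (hL : ∀ x, ‖L x‖ ≤ M) (hLL : ∀ x y, ‖L x - L y‖ ≤ M * dist x y ^ α)
    (hgL : ∀ x h, |g (x + h) - g x - L x h| ≤ M * ‖h‖ ^ α * ‖h‖) : MemC1a α g := by
  have hderiv (x : Ed d) : HasFDerivAt g (L x) x := hasFDerivAt_of_norm_sub_le_rpow_mul hα (hgL x)
  have hfd : fderiv ℝ g = L := funext fun x => (hderiv x).fderiv
  have hhol : HolderWith M.toNNReal α.toNNReal L := HolderWith.of_dist_le fun x y => by
    rw [dist_eq_norm, Real.coe_toNNReal α hα.le]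
    exact (hLL x y).trans (by gcongr; exact M.le_coe_toNNReal)
  refine ⟨contDiff_one_iff_fderiv.2 ⟨fun x => (hderiv x).differentiableAt, ?_⟩,
    ⟨M, Set.forall_mem_range.2 hg⟩, ⟨M, Set.forall_mem_range.2 fun x => ?_⟩, M.toNNReal, ?_⟩
  · rw [hfd]
    exact hhol.continuous (Real.toNNReal_pos.2 hα)
  · rw [hfd]
    exact hL x
  · rwa [hfd]

theorem BddOnZ.memC1a_apply_diracW (hα : 0 < α) {φ : W d →ₗ[ℝ] ℝ} (hφ : BddOnZ α φ) :
    MemC1a α fun x => φ (diracW x) := by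
  obtain ⟨M, hM0, hM⟩ := hφ.exists_nonneg_bound
  let L : Ed d → Ed d →L[ℝ] ℝ := fun x => (φ ∘ₗ derivDirac α x).mkContinuous M fun v =>
    hM _ (inZ_derivDirac hα x v) _ (dualNorm_derivDirac_le x v)
  refine memC1a_of_taylor_bounds hα (L := L) (M := M) (fun x => ?_) (fun x => ?_) (fun x y => ?_)
    (fun x h => ?_)
  · simpa using hM _ (inZ_diracW x) 1 (dualNorm_diracW_le x)
  · exact LinearMap.mkContinuous_norm_le _ hM0 _
  · refine ContinuousLinearMap.opNorm_le_bound _ (by positivity) fun v => ?_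
    simpa [L, mul_assoc] using hM _ ((inZ_derivDirac hα x v).sub (inZ_derivDirac hα y v)) _
      (dualNorm_derivDirac_sub_le hα.le x y v)
  · simpa [L, mul_assoc] using
      hM _ (((inZ_diracW (x + h)).sub (inZ_diracW x)).sub (inZ_derivDirac hα x h)) _
        (dualNorm_diracW_sub_sub_derivDirac_le hα.le x h)

theorem bddOnZ_proj {y : Ed d → ℝ} (hy : MemC1a α y) : BddOnZ α (LinearMap.proj y) :=
  ⟨c1aNorm α y, fun z hz => by simpa [mul_comm] using abs_le_dualNorm_mul hz.1 hy⟩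

theorem zDualNorm_proj_le {y : Ed d → ℝ} (hy : MemC1a α y) :
    zDualNorm α (LinearMap.proj y) ≤ c1aNorm α y := by
  refine Real.sSup_le ?_ (c1aNorm_nonneg y)
  rintro r ⟨z, hz, hz1, rfl⟩
  exact (abs_le_dualNorm_mul hz.1 hy).trans (mul_le_of_le_one_left (c1aNorm_nonneg y) hz1)

end Main

theorem Zdual_isomorphic_C1a_general (d : ℕ) (α : ℝ) (hα : 0 < α) :
    (∀ φ₁ φ₂ : W d →ₗ[ℝ] ℝ, BddOnZ α φ₁ → BddOnZ α φ₂ →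
      (∀ x : Ed d, φ₁ (diracW x) = φ₂ (diracW x)) →
      ∀ z : W d, InZ α z → φ₁ z = φ₂ z) ∧
    (∀ φ : W d →ₗ[ℝ] ℝ, BddOnZ α φ → MemC1a α (fun x => φ (diracW x))) ∧
    (∀ y : Ed d → ℝ, MemC1a α y →
      ∃ φ : W d →ₗ[ℝ] ℝ, BddOnZ α φ ∧ (∀ x : Ed d, φ (diracW x) = y x) ∧
        zDualNorm α φ ≤ c1aNorm α y) :=
  ⟨fun _ _ h₁ h₂ hd _ hz => h₁.eq_of_diracW h₂ hd hz,
    fun _ hφ => hφ.memC1a_apply_diracW hα,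
    fun _ hy => ⟨LinearMap.proj _, bddOnZ_proj hy, fun _ => rfl, zDualNorm_proj_le hy⟩⟩

/-- T : Z* → C^{1+α}(ℝ^d), (Tφ)(x) = φ(δ_x), is a linear isomorphism of Banach spaces:
it is injective (functionals agreeing on Diracs agree on Z), maps Z* into C^{1+α}(ℝ^d),
and is surjective with ‖T⁻¹y‖_{Z*} ≤ ‖y‖_{C^{1+α}} for all y ∈ C^{1+α}(ℝ^d). -/
theorem Zdual_isomorphic_C1a (d : ℕ) (α : ℝ) (hα : 0 < α) (hα1 : α ≤ 1) :
    (∀ φ₁ φ₂ : W d →ₗ[ℝ] ℝ, BddOnZ α φ₁ → BddOnZ α φ₂ →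
      (∀ x : Ed d, φ₁ (diracW x) = φ₂ (diracW x)) →
      ∀ z : W d, InZ α z → φ₁ z = φ₂ z) ∧
    (∀ φ : W d →ₗ[ℝ] ℝ, BddOnZ α φ → MemC1a α (fun x => φ (diracW x))) ∧
    (∀ y : Ed d → ℝ, MemC1a α y →
      ∃ φ : W d →ₗ[ℝ] ℝ, BddOnZ α φ ∧ (∀ x : Ed d, φ (diracW x) = y x) ∧
        zDualNorm α φ ≤ c1aNorm α y) :=
  Zdual_isomorphic_C1a_general d α hα
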